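/- For every n, L ∈ ℕ, 0 < β < α < 1, 0 < ε < 1, and every realization of the sets A_1, ..., A_L ⊆ [n] (each of size αn) and B_i ⊆ A_i (each of size βn), the resulting function HT = HT_{n,α,β,ε,L} is strictly monotone: for all x, y ∈ {0,1}^n with x ≠ y and x_i ≥ y_i for all 1 ≤ i ≤ n, it holds that HT(x) > HT(y). -/

import Mathlib

open MeasureTheory
open scoped ENNReal NNReal

namespace EA

attribute [local instance] Classical.propDecidable

/-- A search point: a bit string of length `n`. -/
abbrev Pt (n : ℕ) := Fin n → Bool

/-- Number of one-bits of `x` inside the index set `A`. -/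
def onesIn {n : ℕ} (A : Finset (Fin n)) (x : Pt n) : ℕ :=
  (A.filter fun i => x i = true).card

/-- Number of zero-bits of `x` inside the index set `A`. -/
def zerosIn {n : ℕ} (A : Finset (Fin n)) (x : Pt n) : ℕ :=
  (A.filter fun i => x i = false).card

/-- The OneMax value: the number of one-bits. -/
def OM {n : ℕ} (x : Pt n) : ℕ := onesIn Finset.univ x

/-- Density `d(A, x)` of zero-bits of `x` in `A`. -/
noncomputable def dens {n : ℕ} (A : Finset (Fin n)) (x : Pt n) : ℝ :=
  (zerosIn A x : ℝ) / (A.card : ℝ)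

/-- Hamming distance: the number of bits in which `x` and `y` differ. -/
def hamming {n : ℕ} (x y : Pt n) : ℕ :=
  (Finset.univ.filter fun i : Fin n => x i ≠ y i).card

/-! ### Mutation as a probability mass function -/

/-- Bernoulli distribution with parameter `min p 1`. -/
noncomputable def bern (p : ℝ≥0∞) : PMF Bool :=
  PMF.ofFintype (fun b => cond b (min p 1) (1 - min p 1))
    (by simp [add_tsub_cancel_of_le (min_le_right p 1)])

/-- Product of `k` independent Bernoulli random bits. -/
noncomputable def piBern : (k : ℕ) → ℝ≥0∞ → PMF (Fin k → Bool)
  | 0, _ => PMF.pure fun i => i.elim0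
  | k + 1, p => (bern p).bind fun b => (piBern k p).map (Fin.cons b)

/-- Standard bit mutation with rate `c/n`: each bit of `x` is flipped independently
with probability `c/n`. -/
noncomputable def mutPMF (n : ℕ) (c : ℝ) (x : Pt n) : PMF (Pt n) :=
  (piBern n (ENNReal.ofReal (c / n))).map fun b i => xor (x i) (b i)

/-- The result of `d` consecutive independent standard bit mutations started at `x`. -/
noncomputable def mutChain (n : ℕ) (c : ℝ) : ℕ → Pt n → PMF (Pt n)
  | 0, x => PMF.pure x
  | d + 1, x => (mutPMF n c x).bind (mutChain n c d)

/-! ### The random forest `F'` (and a single tree of it), as a Markov chain of PMFs.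

A forest state is a list of vertices in order of creation; entry `some j` means the vertex
is a child of vertex `j`, and `none` means the vertex is a root. -/

/-- One round of the forest process: each existing vertex independently spawns a child with
probability `1/μ`, and one new root is added. -/
noncomputable def forestStep (μ : ℕ) (s : List (Option ℕ)) : PMF (List (Option ℕ)) :=
  (piBern s.length ((μ : ℝ≥0∞))⁻¹).map fun b =>
    s ++ (((List.finRange s.length).filter fun i => b i).map fun i => some i.1) ++ [none]

/-- The random forest `F'`: in round `0` a single root; in each subsequent round each vertex
spawns a child with probability `1/μ` and a new root is added. -/
noncomputable def forestPMF (μ : ℕ) : ℕ → PMF (List (Option ℕ))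
  | 0 => PMF.pure [none]
  | t + 1 => (forestPMF μ t).bind (forestStep μ)

/-- One round of the single-tree process: each existing vertex independently spawns a child
with probability `1/μ` (no new roots). -/
noncomputable def treeStep (μ : ℕ) (s : List (Option ℕ)) : PMF (List (Option ℕ)) :=
  (piBern s.length ((μ : ℝ≥0∞))⁻¹).map fun b =>
    s ++ (((List.finRange s.length).filter fun i => b i).map fun i => some i.1)

/-- A single tree of the random forest `F'`. -/
noncomputable def treePMF (μ : ℕ) : ℕ → PMF (List (Option ℕ))
  | 0 => PMF.pure [none]
  | t + 1 => (treePMF μ t).bind (treeStep μ)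

/-- Depth of vertex `i` in a forest state (with fuel). -/
def depthL (s : List (Option ℕ)) : ℕ → ℕ → ℕ
  | 0, _ => 0
  | fuel + 1, i =>
    match s.getD i none with
    | none => 0
    | some j => depthL s fuel j + 1

/-- Depth of vertex `i` in a forest state. -/
def depthOf (s : List (Option ℕ)) (i : ℕ) : ℕ := depthL s (i + 1) i

/-- The number of vertices of depth `d` in a forest state. -/
def countDepth (s : List (Option ℕ)) (d : ℕ) : ℕ :=
  ((List.range s.length).filter fun i => depthOf s i == d).length

/-! ### The source of randomness.

The sample space is the interval `[0,1)` with Lebesgue measure; all the randomness used by the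
algorithm is extracted from the binary digits of the sample `u ∈ [0,1)`, re-packaged into a
countable family of independent uniform random variables `unif u m ∈ [0,1)`. -/

/-- The `k`-th binary digit of `u ∈ [0,1)`. -/
noncomputable def bit (u : ℝ) (k : ℕ) : Bool := decide (⌊u * 2 ^ (k + 1)⌋₊ % 2 = 1)

/-- A countable family of independent uniform-`[0,1)` random variables extracted from the
binary digits of `u`. -/
noncomputable def unif (u : ℝ) (m : ℕ) : ℝ :=
  ∑' k : ℕ, if bit u (Nat.pair m k) then ((1 : ℝ) / 2 ^ (k + 1)) else 0

/-- Independent uniforms, triple-indexed. -/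
noncomputable def unifAt (u : ℝ) (a b c : ℕ) : ℝ := unif u (Nat.pair a (Nat.pair b c))

/-- The underlying probability measure: Lebesgue measure on `[0,1)`. -/
noncomputable def P : Measure ℝ := volume.restrict (Set.Ico (0 : ℝ) 1)

/-- A uniformly random element of `{0, ..., m-1}` obtained from a uniform `r ∈ [0,1)`. -/
noncomputable def pickN (r : ℝ) (m : ℕ) : ℕ := min ⌊r * m⌋₊ (m - 1)

/-! ### The (μ+1)-EA -/

/-- A vertex (individual) identifier: `Sum.inl j` is the initial individual in slot `j`,
`Sum.inr t` is the offspring created in round `t`. -/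
abbrev V := ℕ ⊕ ℕ

/-- Creation time of a vertex (used as recursion fuel). -/
def vtime : V → ℕ
  | Sum.inl _ => 0
  | Sum.inr t => t + 1

/-- Configuration of a run of the `(μ+1)`-EA on bit strings of length `n`: population size `μ`,
mutation parameter `c` (mutation rate `c/n`), fitness function `f`, initial population `pop₀`
(only slots `< μ` are relevant), and the distinguished set `A` (the current "hot topic")
defining the rank `rk x = onesIn A x`. -/
structure Cfg (n : ℕ) where
  μ : ℕ
  c : ℝ
  f : Pt n → ℝ
  pop₀ : ℕ → Pt n
  A : Finset (Fin n)

namespace Cfg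

variable {n : ℕ} (C : Cfg n)

/-- Rank of a search point: number of one-bits in `A`. -/
def rk (x : Pt n) : ℕ := onesIn C.A x

/-- Index of the parent selected (uniformly at random) in round `t`. -/
noncomputable def parentIdx (u : ℝ) (t : ℕ) : ℕ := pickN (unifAt u 0 t 0) C.μ

/-- Standard bit mutation performed in round `t`: each bit flips independently with
probability `c/n`. -/
noncomputable def mutate (u : ℝ) (t : ℕ) (x : Pt n) : Pt n :=
  fun i => xor (x i) (decide (unifAt u 1 t i.1 < C.c / n))

/-- The `μ+1` candidates in round `t` (index `μ` is the new offspring), given state `s`. -/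
noncomputable def cands (u : ℝ) (t : ℕ) (s : ℕ → Pt n × V) : ℕ → Pt n × V :=
  fun j => if j < C.μ then s j else (C.mutate u t (s (C.parentIdx u t)).1, Sum.inr t)

/-- The index (among the `μ+1` candidates) of the removed individual in round `t`:
an individual of minimal fitness, ties broken uniformly at random. -/
noncomputable def removedIdx (u : ℝ) (t : ℕ) (s : ℕ → Pt n × V) : ℕ :=
  let g := C.cands u t s
  let M := (Finset.range (C.μ + 1)).filter fun j =>
    ∀ j' ∈ Finset.range (C.μ + 1), C.f (g j).1 ≤ C.f (g j').1
  (M.sort (· ≤ ·)).getD (pickN (unifAt u 2 t 0) M.card) 0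

/-- One round of the `(μ+1)`-EA. -/
noncomputable def stepRun (u : ℝ) (t : ℕ) (s : ℕ → Pt n × V) : ℕ → Pt n × V :=
  fun j => if j = C.removedIdx u t s then C.cands u t s C.μ else s j

/-- The population (with origins of the individuals) after `t` rounds. -/
noncomputable def run (u : ℝ) : ℕ → ℕ → Pt n × V
  | 0 => fun j => (C.pop₀ j, Sum.inl j)
  | t + 1 => C.stepRun u t (run u t)

/-- The parent (search point together with its origin vertex) selected in round `t`. -/
noncomputable def parentAt (u : ℝ) (t : ℕ) : Pt n × V := C.run u t (C.parentIdx u t)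

/-- The offspring created in round `t`. -/
noncomputable def offspringAt (u : ℝ) (t : ℕ) : Pt n := C.mutate u t (C.parentAt u t).1

/-- The search point removed from the population in round `t`. -/
noncomputable def removedAt (u : ℝ) (t : ℕ) : Pt n :=
  (C.cands u t (C.run u t) (C.removedIdx u t (C.run u t))).1

/-- The search point associated with a vertex. -/
noncomputable def vpt (u : ℝ) : V → Pt n
  | Sum.inl j => C.pop₀ j
  | Sum.inr t => C.offspringAt u t

/-- The parent vertex of a vertex (`none` for initial individuals). -/
noncomputable def vparent (u : ℝ) : V → Option V
  | Sum.inl _ => none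
  | Sum.inr t => some (C.parentAt u t).2

/-- Whether a vertex identifier denotes an actual individual of the run. -/
def validV : V → Prop
  | Sum.inl j => j < C.μ
  | Sum.inr _ => True

/-- Auxiliary: follow parent pointers while the parent has rank at least `i`. -/
noncomputable def rootAux (u : ℝ) (i : ℕ) : ℕ → V → V
  | 0, v => v
  | fuel + 1, v =>
    match C.vparent u v with
    | none => v
    | some w => if i ≤ C.rk (C.vpt u w) then rootAux u i fuel w else v

/-- The root, in the family forest `F_i`, of the tree containing vertex `v`. -/
noncomputable def rootIn (u : ℝ) (i : ℕ) (v : V) : V := C.rootAux u i (vtime v) v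

/-- Auxiliary: depth with fuel. -/
noncomputable def depthAux (u : ℝ) (i : ℕ) : ℕ → V → ℕ
  | 0, _ => 0
  | fuel + 1, v =>
    match C.vparent u v with
    | none => 0
    | some w => if i ≤ C.rk (C.vpt u w) then depthAux u i fuel w + 1 else 0

/-- The depth of vertex `v` in the family forest `F_i` (roots have depth `0`). -/
noncomputable def depthIn (u : ℝ) (i : ℕ) (v : V) : ℕ := C.depthAux u i (vtime v) v

/-- Whether vertex `v` is a root of the family forest `F_i`: it has rank at least `i` and
either no parent or a parent of rank less than `i`. -/
def isRootIn (u : ℝ) (i : ℕ) (v : V) : Prop :=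
  i ≤ C.rk (C.vpt u v) ∧ (C.vparent u v).elim True fun w => C.rk (C.vpt u w) < i

/-- The number of individuals of rank at least `i` among initial individuals and the
offspring of the first `t` rounds (i.e. `|X_{≥ i}|` after `t` rounds). -/
noncomputable def numGe (u : ℝ) (i : ℕ) (t : ℕ) : ℕ :=
  ((Finset.range C.μ).filter fun j => i ≤ C.rk (C.pop₀ j)).card +
  ((Finset.range t).filter fun s => i ≤ C.rk (C.offspringAt u s)).card

end Cfg

/-- The first time (possibly `⊤`) at which a predicate on rounds holds. -/
noncomputable def hitTime (p : ℕ → Prop) : ℕ∞ :=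
  sInf {m : ℕ∞ | ∃ t : ℕ, m = t ∧ p t}

namespace Cfg

variable {n : ℕ} (C : Cfg n)

/-- The first round at which `X_{≥i}` is nonempty. -/
noncomputable def tFirst (u : ℝ) (i : ℕ) : ℕ∞ :=
  hitTime fun t => 1 ≤ C.numGe u i t

/-- The first round at which `|X_{≥i}|` reaches `x`. -/
noncomputable def tReach (u : ℝ) (i : ℕ) (x : ℝ) : ℕ∞ :=
  hitTime fun t => x ≤ (C.numGe u i t : ℝ)

/-- `T^κ`: the number of rounds until `|X_{≥ i}|` reaches `μ^κ` after the first point of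
`X_{≥ i}` is visited. -/
noncomputable def Tkappa (u : ℝ) (i : ℕ) (κ : ℝ) : ℕ∞ :=
  C.tReach u i ((C.μ : ℝ) ^ κ) - C.tFirst u i

/-- `t_i`: the first round at which an individual of rank at least `i` exists. -/
noncomputable def tBirth (u : ℝ) (i : ℕ) : ℕ∞ := C.tFirst u i

/-- `T_i`: the round at which the last individual of rank at most `i` is eliminated, i.e. the
first round at which the whole population has rank larger than `i`. -/
noncomputable def tDie (u : ℝ) (i : ℕ) : ℕ∞ :=
  hitTime fun t => ∀ j < C.μ, i < C.rk ((C.run u t j).1)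

/-- The last round at which an individual of rank `i` is removed from the population. -/
noncomputable def lastDelTime (u : ℝ) (i : ℕ) : ℕ :=
  sSup {t : ℕ | C.rk (C.removedAt u t) = i}

/-- `Z_i`: the OneMax value of the last search point of rank `i` that the algorithm deletes
from its population (with `Z_i := Z_{i-1}` if no such point exists). -/
noncomputable def Z (u : ℝ) : ℕ → ℕ
  | 0 =>
    if ({t : ℕ | C.rk (C.removedAt u t) = 0}).Nonempty then
      OM (C.removedAt u (C.lastDelTime u 0))
    else 0
  | i + 1 =>
    if ({t : ℕ | C.rk (C.removedAt u t) = i + 1}).Nonempty then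
      OM (C.removedAt u (C.lastDelTime u (i + 1)))
    else Z u i

/-- Event `E_a`: no individual of rank at most `i-1` creates an offspring of rank at
least `i+1`. -/
def Ea (u : ℝ) (i : ℕ) : Prop :=
  ∀ t : ℕ, C.rk (C.parentAt u t).1 < i → C.rk (C.offspringAt u t) < i + 1

/-- The number of roots of the family forest `F_i`. -/
noncomputable def rootsCount (u : ℝ) (i : ℕ) : ℕ :=
  {v : V | C.validV v ∧ C.isRootIn u i v}.ncard

/-- Event `E_b`: there are at most `ε μ log³ μ` roots in `F_i`. -/
def Eb (u : ℝ) (i : ℕ) (ε : ℝ) : Prop :=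
  (C.rootsCount u i : ℝ) ≤ ε * C.μ * (Real.log C.μ) ^ 3

/-- Event `E_c`: no vertex of rank exactly `i` of depth at most `φ log μ` in `F_i` creates an
offspring of rank larger than `i`. -/
def Ec (u : ℝ) (i : ℕ) (φ : ℝ) : Prop :=
  ∀ t : ℕ, C.rk (C.parentAt u t).1 = i →
    (C.depthIn u i (C.parentAt u t).2 : ℝ) ≤ φ * Real.log C.μ →
    C.rk (C.offspringAt u t) ≤ i

/-- Event `E_d`: every vertex of rank `i` creating an offspring of rank at least `i+1` has a
OneMax value at least `c_d log μ` below that of its root (if the root has OneMax value at least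
`(1-8ε)n`), resp. OneMax value at most `(1-4ε)n` (if the root has OneMax value at most
`(1-8ε)n`); moreover the improving mutation changes at most `(c_d/2) log μ` bits. -/
def Ed (u : ℝ) (i : ℕ) (ε c_d : ℝ) : Prop :=
  ∀ t : ℕ, C.rk (C.parentAt u t).1 = i → i + 1 ≤ C.rk (C.offspringAt u t) →
    (((1 - 8 * ε) * n ≤ (OM (C.vpt u (C.rootIn u i (C.parentAt u t).2)) : ℝ) →
        (OM ((C.parentAt u t).1) : ℝ) ≤
          (OM (C.vpt u (C.rootIn u i (C.parentAt u t).2)) : ℝ) - c_d * Real.log C.μ) ∧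
      ((OM (C.vpt u (C.rootIn u i (C.parentAt u t).2)) : ℝ) ≤ (1 - 8 * ε) * n →
        (OM ((C.parentAt u t).1) : ℝ) ≤ (1 - 4 * ε) * n) ∧
      (hamming ((C.parentAt u t).1) (C.offspringAt u t) : ℝ) ≤ c_d / 2 * Real.log C.μ)

/-- Event `E_e`: no vertex of rank `i` has a OneMax value exceeding that of its root in `F_i`
by more than `c_e log μ`. -/
def Ee (u : ℝ) (i : ℕ) (c_e : ℝ) : Prop :=
  ∀ v : V, C.validV v → C.rk (C.vpt u v) = i →
    (OM (C.vpt u v) : ℝ) ≤ (OM (C.vpt u (C.rootIn u i v)) : ℝ) + c_e * Real.log C.μ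

/-- The good event `E_good(i) = E_a ∩ E_b ∩ E_c ∩ E_d ∩ E_e`. -/
def Egood (u : ℝ) (i : ℕ) (ε φ c_d c_e : ℝ) : Prop :=
  C.Ea u i ∧ C.Eb u i ε ∧ C.Ec u i φ ∧ C.Ed u i ε c_d ∧ C.Ee u i c_e

/-- The vertices of the family forest `F_i` present after `t` rounds, in creation order. -/
noncomputable def famVerts (u : ℝ) (i : ℕ) (t : ℕ) : List V :=
  ((List.range C.μ).filter fun j => decide (i ≤ C.rk (C.pop₀ j))).map Sum.inl ++
  ((List.range t).filter fun s => decide (i ≤ C.rk (C.offspringAt u s))).map Sum.inr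

/-- The family forest `F_i` after `t` rounds, as a list of parent pointers (in creation
order); `none` denotes a root. -/
noncomputable def famForest (u : ℝ) (i : ℕ) (t : ℕ) : List (Option ℕ) :=
  (C.famVerts u i t).map fun v =>
    match v with
    | Sum.inl _ => none
    | Sum.inr s =>
      if i ≤ C.rk (C.vpt u (C.parentAt u s).2) then
        some ((C.famVerts u i t).idxOf (C.parentAt u s).2)
      else none

/-- The number of fitness function evaluations before the first evaluation of the all-ones
string (evaluations `0, ..., μ-1` are the initial population, evaluation `μ + t` is the
offspring of round `t`). -/
noncomputable def Topt (u : ℝ) : ℕ∞ :=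
  hitTime fun k =>
    (k < C.μ ∧ C.pop₀ k = fun _ => true) ∨
    (C.μ ≤ k ∧ C.offspringAt u (k - C.μ) = fun _ => true)

end Cfg

/-- The trajectory of the random forest `F'`, driven by the uniform randomness of `u`
(tag `6`): round `0` has a single root; in each round each existing vertex spawns a child
with probability `1/μ` and a new root is added. -/
noncomputable def forestTraj (μ : ℕ) (u : ℝ) : ℕ → List (Option ℕ)
  | 0 => [none]
  | t + 1 =>
    let s := forestTraj μ u t
    s ++ ((List.range s.length).filter fun k => decide (unifAt u 6 t k < 1 / (μ : ℝ))).map some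
      ++ [none]

/-- `F` is contained in `G` as a subforest: there is an injection of the vertices of `F` into
those of `G` preserving the root/parent structure. -/
def IsSubforest (F G : List (Option ℕ)) : Prop :=
  ∃ ι : ℕ → ℕ,
    (∀ v < F.length, ι v < G.length) ∧
    (∀ v < F.length, ∀ w < F.length, ι v = ι w → v = w) ∧
    (∀ v < F.length, (F.getD v none).map ι = G.getD (ι v) none)

/-- The uniformly random initial population (tag `3`). -/
noncomputable def initU (n : ℕ) (u : ℝ) : ℕ → Pt n :=
  fun j i => decide (unifAt u 3 j i.1 < (1 : ℝ) / 2)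

/-- The linear auxiliary function `f_ℓ(x) = n · Σ_{j ∈ A} x_j + Σ_{j ∉ A} x_j`. -/
noncomputable def fL (n : ℕ) (A : Finset (Fin n)) : Pt n → ℝ :=
  fun x => (n : ℝ) * (onesIn A x : ℝ) + (onesIn Aᶜ x : ℝ)

/-- The standard `(μ+1)`-EA configuration on the linear function `f_ℓ` determined by the
hot topic `A`, with uniformly random initial population. -/
noncomputable def eaL (n μ : ℕ) (c : ℝ) (A : Finset (Fin n)) (u : ℝ) : Cfg n :=
  ⟨μ, c, fL n A, initU n u, A⟩

/-- As `eaL`, but with prescribed initial population `pop₀`. -/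
noncomputable def eaLFrom (n μ : ℕ) (c : ℝ) (A : Finset (Fin n)) (pop₀ : ℕ → Pt n) : Cfg n :=
  ⟨μ, c, fL n A, pop₀, A⟩

/-! ### The HotTopic function -/

section HT

variable (n L : ℕ) (ε : ℝ) (A B : ℕ → Finset (Fin n))

/-- The level `ℓ(x) = max {ℓ' ∈ [L] : d(B_{ℓ'}, x) ≤ ε}` (and `0` if no such `ℓ'` exists). -/
noncomputable def levelHT (x : Pt n) : ℕ :=
  ((Finset.Icc 1 L).filter fun l => dens (B l) x ≤ ε).sup id

/-- Extension of the sets `A_l` by `A_{L+1} := ∅`. -/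
def AextHT (l : ℕ) : Finset (Fin n) := if l ≤ L then A l else ∅

/-- The HotTopic function
`HT(x) = ℓ(x) n² + n Σ_{i ∈ A_{ℓ(x)+1}} x_i + Σ_{i ∈ R_{ℓ(x)+1}} x_i`. -/
noncomputable def HTf (x : Pt n) : ℕ :=
  levelHT n L ε B x * n ^ 2 +
    n * onesIn (AextHT n L A (levelHT n L ε B x + 1)) x +
    onesIn (AextHT n L A (levelHT n L ε B x + 1))ᶜ x

end HT

/-- A uniformly random element of a list (given a uniform `r ∈ [0,1)`). -/
noncomputable def pickFromList {γ : Type*} [Inhabited γ] (l : List γ) (r : ℝ) : γ :=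
  l.getD (pickN r l.length) default

/-- The random set `A_l`: a uniformly random subset of `[n]` of size `a` (tag `4`). -/
noncomputable def randA (n : ℕ) (a : ℕ) (u : ℝ) (l : ℕ) : Finset (Fin n) :=
  pickFromList ((Finset.univ.powersetCard a : Finset (Finset (Fin n))).toList) (unifAt u 4 l 0)

/-- The random set `B_l`: a uniformly random subset of `A_l` of size `b` (tag `5`). -/
noncomputable def randB (n : ℕ) (b : ℕ) (u : ℝ) (Al : Finset (Fin n)) (l : ℕ) : Finset (Fin n) :=
  pickFromList ((Al.powersetCard b).toList) (unifAt u 5 l 0)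

end EA

/-! Setting bits to one can only lower zero-densities, so the level `ℓ` never drops. If it
rises, the gain of `n²` outweighs the within-level part `n·|x ∩ A| + |x ∩ R|`, which stays
below `n²` as long as some bit is zero; if it stays, that within-level part is a positively
weighted OneMax, hence strictly monotone. -/

namespace EA

variable {n : ℕ}

theorem onesIn_mono (S : Finset (Fin n)) : Monotone (onesIn S) := fun _ _ hyx =>
  Finset.card_le_card <| Finset.monotone_filter_right S fun i _ => Bool.le_iff_imp.mp (hyx i)

theorem onesIn_lt_onesIn {S : Finset (Fin n)} {x y : Pt n} (hyx : y ≤ x) {i : Fin n}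
    (hiS : i ∈ S) (hyi : y i = false) (hxi : x i = true) : onesIn S y < onesIn S x := by
  refine Finset.card_lt_card <| (Finset.ssubset_iff_of_subset ?_).mpr ⟨i, ?_, ?_⟩
  · exact Finset.monotone_filter_right S fun j _ => Bool.le_iff_imp.mp (hyx j)
  · simp [hiS, hxi]
  · simp [hyi]

theorem zerosIn_antitone (S : Finset (Fin n)) : Antitone (zerosIn S) := fun _ _ hyx =>
  Finset.card_le_card <| Finset.monotone_filter_right S fun i _ hxi => by
    simpa [hxi] using Bool.le_iff_imp.mp (hyx i)

theorem dens_antitone (S : Finset (Fin n)) : Antitone (dens S) := fun _ _ hyx =>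
  div_le_div_of_nonneg_right (by exact_mod_cast zerosIn_antitone S hyx) (Nat.cast_nonneg _)

theorem levelHT_mono (L : ℕ) (ε : ℝ) (B : ℕ → Finset (Fin n)) : Monotone (levelHT n L ε B) :=
  fun _ _ hyx => Finset.sup_mono <| Finset.monotone_filter_right _ fun l _ hl =>
    (dens_antitone (B l) hyx).trans hl

theorem onesIn_add_onesIn_compl (S : Finset (Fin n)) (x : Pt n) :
    onesIn S x + onesIn Sᶜ x = OM x := by
  unfold OM onesIn
  rw [← Finset.card_union_of_disjoint (Finset.disjoint_filter_filter disjoint_compl_right),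
    ← Finset.filter_union, Finset.union_compl]

theorem OM_lt {x : Pt n} {i : Fin n} (hxi : x i = false) : OM x < n := by
  simpa [OM, onesIn] using
    Finset.card_lt_card (Finset.filter_ssubset.mpr ⟨i, Finset.mem_univ i, by simp [hxi]⟩)

theorem weighted_onesIn_lt (S : Finset (Fin n)) {x y : Pt n} (hyx : y < x) :
    n * onesIn S y + onesIn Sᶜ y < n * onesIn S x + onesIn Sᶜ x := by
  obtain ⟨hle, i, hi⟩ := Pi.lt_def.mp hyx
  obtain ⟨hyi, hxi⟩ := Bool.lt_iff.mp hi
  have hn : 0 < n := i.pos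
  by_cases hiS : i ∈ S
  · exact add_lt_add_of_lt_of_le
      (Nat.mul_lt_mul_of_pos_left (onesIn_lt_onesIn hle hiS hyi hxi) hn) (onesIn_mono _ hle)
  · exact add_lt_add_of_le_of_lt (Nat.mul_le_mul_left n (onesIn_mono S hle))
      (onesIn_lt_onesIn hle (Finset.mem_compl.mpr hiS) hyi hxi)

theorem weighted_onesIn_lt_sq (S : Finset (Fin n)) {x : Pt n} {i : Fin n} (hxi : x i = false) :
    n * onesIn S x + onesIn Sᶜ x < n ^ 2 := by
  have hsum : onesIn S x + onesIn Sᶜ x + 1 ≤ n := by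
    rw [onesIn_add_onesIn_compl]; exact OM_lt hxi
  have hcompl : onesIn Sᶜ x ≤ n * onesIn Sᶜ x := Nat.le_mul_of_pos_left _ i.pos
  nlinarith

theorem HTf_lt_of_levelHT_lt (L : ℕ) (ε : ℝ) (A B : ℕ → Finset (Fin n)) {x y : Pt n}
    {i : Fin n} (hyi : y i = false) (hlt : levelHT n L ε B y < levelHT n L ε B x) :
    HTf n L ε A B y < HTf n L ε A B x :=
  calc HTf n L ε A B y
      < levelHT n L ε B y * n ^ 2 + n ^ 2 := by
        rw [HTf, add_assoc]; exact Nat.add_lt_add_left (weighted_onesIn_lt_sq _ hyi) _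
    _ = (levelHT n L ε B y + 1) * n ^ 2 := by ring
    _ ≤ levelHT n L ε B x * n ^ 2 := Nat.mul_le_mul_right _ hlt
    _ ≤ HTf n L ε A B x := by rw [HTf, add_assoc]; exact Nat.le_add_right _ _

end EA

theorem hottopic_monotone_general (n L : ℕ) (ε : ℝ)
    (A B : ℕ → Finset (Fin n))
    (x y : EA.Pt n) (hxy : x ≠ y) (hle : ∀ i, y i ≤ x i) :
    EA.HTf n L ε A B y < EA.HTf n L ε A B x := by
  have hyx : y < x := lt_of_le_of_ne hle hxy.symm
  obtain ⟨i, hi⟩ := (Pi.lt_def.mp hyx).2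
  rcases (EA.levelHT_mono L ε B hyx.le).lt_or_eq with hlt | heq
  · exact EA.HTf_lt_of_levelHT_lt L ε A B (Bool.lt_iff.mp hi).1 hlt
  · unfold EA.HTf
    rw [heq, add_assoc, add_assoc]
    exact Nat.add_lt_add_left (EA.weighted_onesIn_lt _ hyx) _

/-- For every `n, L ∈ ℕ`, `0 < β < α < 1`, `0 < ε < 1`, and every
realization of the sets `A_1, ..., A_L ⊆ [n]` (each of size `αn`) and `B_l ⊆ A_l` (each of
size `βn`), the function `HT = HT_{n,α,β,ε,L}` is strictly monotone: for all
`x ≠ y ∈ {0,1}ⁿ` with `x_i ≥ y_i` for all `i`, it holds that `HT(x) > HT(y)`. -/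
theorem hottopic_monotone (n L : ℕ) (α β ε : ℝ)
    (hβ0 : 0 < β) (hβα : β < α) (hα1 : α < 1) (hε0 : 0 < ε) (hε1 : ε < 1)
    (A B : ℕ → Finset (Fin n))
    (hAB : ∀ l ∈ Finset.Icc 1 L,
      ((A l).card : ℝ) = α * n ∧ B l ⊆ A l ∧ ((B l).card : ℝ) = β * n)
    (x y : EA.Pt n) (hxy : x ≠ y) (hle : ∀ i, y i ≤ x i) :
    EA.HTf n L ε A B y < EA.HTf n L ε A B x :=
  hottopic_monotone_general n L ε A B x y hxy hle
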